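/- arXiv:2109.12320 — 12 statements merged into one kernel-verified Lean document; each statement's English description precedes it below -/
import Mathlib

section
/- (Reduction Lemma) For every X ∈ 𝒳, ρ(X) = inf{m ∈ ℝ : X + m·U ∈ 𝒜 + ker π} (infimum in the extended reals). -/
open Pointwise

/-- The risk measure associated with acceptance set `A`, eligible payoffs `M`
and pricing functional `π` (infimum in the extended reals, `sInf ∅ = +∞`). -/
noncomputable def rho {X : Type*} [AddCommGroup X] [Module ℝ X]
    (M : Submodule ℝ X) (π : M →ₗ[ℝ] ℝ) (A : Set X) (x : X) : EReal :=
  sInf {r : EReal | ∃ Z : M, x + (Z : X) ∈ A ∧ ((π Z : ℝ) : EReal) = r}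

/-- The kernel of the pricing functional `π`, viewed as a subset of `X`. -/
def kerSet {X : Type*} [AddCommGroup X] [Module ℝ X]
    (M : Submodule ℝ X) (π : M →ₗ[ℝ] ℝ) : Set X :=
  Subtype.val '' {Z : M | π Z = 0}

/-- `K`-directional closure of `S`. -/
def clK {X : Type*} [AddCommGroup X] [Module ℝ X] (K : X) (S : Set X) : Set X :=
  {x : X | ∀ l : ℝ, 0 < l → ∃ t : ℝ, 0 ≤ t ∧ t < l ∧ x - t • K ∈ S}

/-- `K`-directional interior of `S`. -/
def intK {X : Type*} [AddCommGroup X] [Module ℝ X] (K : X) (S : Set X) : Set X :=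
  {x : X | ∃ l : ℝ, 0 < l ∧ ∀ t : ℝ, 0 ≤ t → t ≤ l → x + t • K ∈ S}

/-- `K`-directional boundary of `S`. -/
def bdK {X : Type*} [AddCommGroup X] [Module ℝ X] (K : X) (S : Set X) : Set X :=
  clK K S \ intK K S

/-- Recession cone of `S`. -/
def recCone {X : Type*} [AddCommGroup X] [Module ℝ X] (S : Set X) : Set X :=
  {v : X | ∀ y ∈ S, ∀ l : ℝ, 0 ≤ l → y + l • v ∈ S}

theorem stmt_3 {X : Type*} [AddCommGroup X] [Module ℝ X]
    (Xpos : Set X)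
    (hXpos0 : (0 : X) ∈ Xpos)
    (hXposSmul : ∀ t : ℝ, 0 ≤ t → ∀ x ∈ Xpos, t • x ∈ Xpos)
    (hXposConv : Convex ℝ Xpos)
    (hXposPointed : ∀ x ∈ Xpos, -x ∈ Xpos → x = 0)
    (M : Submodule ℝ X) (π : M →ₗ[ℝ] ℝ)
    (U : M) (hUpos : (U : X) ∈ Xpos) (hU1 : π U = 1)
    (A : Set X) (hA0 : (0 : X) ∈ A) (hAne : A ≠ Set.univ) (hAmono : A + Xpos ⊆ A) :
    ∀ x : X, rho M π A x
      = sInf {r : EReal | ∃ m : ℝ, x + m • (U : X) ∈ A + kerSet M π ∧ (m : EReal) = r} := by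
  intro x
  unfold rho
  congr 1
  ext r
  constructor
  · rintro ⟨Z, hZ, rfl⟩
    refine ⟨π Z, ?_, rfl⟩
    have : x + (π Z) • (U : X) = (x + (Z : X)) + (((π Z) • U - Z : M) : X) := by
      push_cast; abel
    rw [this]
    exact Set.add_mem_add hZ ⟨(π Z) • U - Z, by simp [hU1], rfl⟩
  · rintro ⟨m, hm, rfl⟩
    obtain ⟨a, ha, k, hk, hak⟩ := hm
    obtain ⟨K, hK0, rfl⟩ := hk
    have hK0' : π K = 0 := hK0
    refine ⟨m • U - K, ?_, by simp [hK0', hU1]⟩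
    simp only at hak
    have : x + ((m • U - K : M) : X) = a := by
      push_cast
      rw [← add_sub_assoc, ← hak]
      abel
    rwa [this]
end

section
/- For every m ∈ ℝ, the strict sublevel set of ρ satisfies {X ∈ 𝒳 : ρ(X) < m} = int_{−U}(𝒜 + ker π) − m·U = 𝒜 + ker π + {t·U : t > 0} − m·U, and this set is contained in 𝒜 + ker π − m·U. -/
open Pointwise

/-! Writing `x + Z = a ∈ 𝒜` with `π(Z) < m` as `x + m·U = a + (π(Z)·U − Z) + (m − π(Z))·U`
shows `ρ(x) < m ↔ x + m·U ∈ 𝒜 + ker π + (0, ∞)·U`. Since `𝒜 + ker π` is stable under adding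
nonnegative multiples of `U`, the latter set is exactly its `(−U)`-directional interior, which
in turn lies inside `𝒜 + ker π`. -/

section

variable {X : Type*} [AddCommGroup X] [Module ℝ X]

def posRay (u : X) : Set X :=
  {x : X | ∃ t : ℝ, 0 < t ∧ x = t • u}

theorem intK_subset (K : X) (S : Set X) : intK K S ⊆ S := by
  rintro x ⟨l, hl, hx⟩
  simpa using hx 0 le_rfl hl.le

theorem intK_neg_eq_add_posRay {S : Set X} {u : X}
    (hS : ∀ x ∈ S, ∀ s : ℝ, 0 ≤ s → x + s • u ∈ S) :
    intK (-u) S = S + posRay u := by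
  ext x
  constructor
  · rintro ⟨l, hl, hx⟩
    exact ⟨x + l • -u, hx l hl.le le_rfl, l • u, ⟨l, hl, rfl⟩, by module⟩
  · rintro ⟨y, hy, _, ⟨t, ht, rfl⟩, rfl⟩
    refine ⟨t, ht, fun s _ hst => ?_⟩
    rw [show y + t • u + s • -u = y + (t - s) • u by module]
    exact hS y hy (t - s) (by linarith)

theorem add_smul_mem_of_add_subset {A P : Set X} (hA : A + P ⊆ A)
    (hP : ∀ t : ℝ, 0 ≤ t → ∀ x ∈ P, t • x ∈ P) {u : X} (hu : u ∈ P) (B : Set X) :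
    ∀ x ∈ A + B, ∀ s : ℝ, 0 ≤ s → x + s • u ∈ A + B := by
  rintro _ ⟨a, ha, b, hb, rfl⟩ s hs
  exact ⟨a + s • u, hA ⟨a, ha, s • u, hP s hs u hu, rfl⟩, b, hb, add_right_comm _ _ _⟩

theorem rho_lt_coe_iff (M : Submodule ℝ X) (π : M →ₗ[ℝ] ℝ) (A : Set X) (x : X) (m : ℝ) :
    rho M π A x < m ↔ ∃ Z : M, x + (Z : X) ∈ A ∧ π Z < m := by
  simp only [rho, sInf_lt_iff, Set.mem_ofPred_eq]
  constructor
  · rintro ⟨_, ⟨Z, hZ, rfl⟩, hZm⟩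
    exact ⟨Z, hZ, EReal.coe_lt_coe_iff.mp hZm⟩
  · rintro ⟨Z, hZ, hZm⟩
    exact ⟨_, ⟨Z, hZ, rfl⟩, EReal.coe_lt_coe_iff.mpr hZm⟩

theorem rho_lt_coe_iff_add_smul_mem {M : Submodule ℝ X} {π : M →ₗ[ℝ] ℝ} {U : M}
    (hU1 : π U = 1) (A : Set X) (x : X) (m : ℝ) :
    rho M π A x < m ↔ x + m • (U : X) ∈ A + kerSet M π + posRay (U : X) := by
  rw [rho_lt_coe_iff]
  constructor
  · rintro ⟨Z, hZ, hZm⟩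
    refine ⟨x + Z + (π Z • (U : X) - Z), ⟨x + Z, hZ, _, ⟨π Z • U - Z, by simp [hU1], by simp⟩, rfl⟩,
      (m - π Z) • (U : X), ⟨m - π Z, by linarith, rfl⟩, by module⟩
  · rintro ⟨_, ⟨a, ha, _, ⟨W, hW, rfl⟩, rfl⟩, _, ⟨t, ht, rfl⟩, hx⟩
    refine ⟨(m - t) • U - W, ?_, ?_⟩
    · convert ha using 1
      simp only [Submodule.coe_sub, Submodule.coe_smul] at hx ⊢
      linear_combination (norm := module) -hx
    · simp only [map_sub, map_smul, hU1, show π W = 0 from hW, smul_eq_mul]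
      linarith

end

theorem stmt_8_general {X : Type*} [AddCommGroup X] [Module ℝ X]
(Xpos : Set X)
    (hXposSmul : ∀ t : ℝ, 0 ≤ t → ∀ x ∈ Xpos, t • x ∈ Xpos)
    (M : Submodule ℝ X) (π : M →ₗ[ℝ] ℝ)
    (U : M) (hUpos : (U : X) ∈ Xpos) (hU1 : π U = 1)
    (A : Set X) (hAmono : A + Xpos ⊆ A) :
    ∀ m : ℝ,
      ({x : X | rho M π A x < (m : EReal)}
          = (fun y => y - m • (U : X)) '' intK (-(U : X)) (A + kerSet M π)) ∧
      ((fun y => y - m • (U : X)) '' intK (-(U : X)) (A + kerSet M π)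
          = (fun y => y - m • (U : X)) ''
              (A + kerSet M π + {x : X | ∃ t : ℝ, 0 < t ∧ x = t • (U : X)})) ∧
      {x : X | rho M π A x < (m : EReal)}
          ⊆ (fun y => y - m • (U : X)) '' (A + kerSet M π) := by
  intro m
  have hint : intK (-(U : X)) (A + kerSet M π) = A + kerSet M π + posRay (U : X) :=
    intK_neg_eq_add_posRay (add_smul_mem_of_add_subset hAmono hXposSmul hUpos _)
  have hlt : {x : X | rho M π A x < (m : EReal)}
      = (fun y => y - m • (U : X)) '' intK (-(U : X)) (A + kerSet M π) := by
    ext x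
    rw [Set.mem_ofPred_eq, rho_lt_coe_iff_add_smul_mem hU1, hint]
    exact ⟨fun h => ⟨_, h, add_sub_cancel_right x _⟩, by rintro ⟨y, hy, rfl⟩; simpa using hy⟩
  refine ⟨hlt, by rw [hint]; rfl, ?_⟩
  rw [hlt]
  exact Set.image_mono (intK_subset _ _)

theorem stmt_8 {X : Type*} [AddCommGroup X] [Module ℝ X]
(Xpos : Set X)
    (hXpos0 : (0 : X) ∈ Xpos)
    (hXposSmul : ∀ t : ℝ, 0 ≤ t → ∀ x ∈ Xpos, t • x ∈ Xpos)
    (hXposConv : Convex ℝ Xpos)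
    (hXposPointed : ∀ x ∈ Xpos, -x ∈ Xpos → x = 0)
    (M : Submodule ℝ X) (π : M →ₗ[ℝ] ℝ)
    (U : M) (hUpos : (U : X) ∈ Xpos) (hU1 : π U = 1)
    (A : Set X) (hA0 : (0 : X) ∈ A) (hAne : A ≠ Set.univ) (hAmono : A + Xpos ⊆ A) :
    ∀ m : ℝ,
      ({x : X | rho M π A x < (m : EReal)}
          = (fun y => y - m • (U : X)) '' intK (-(U : X)) (A + kerSet M π)) ∧
      ((fun y => y - m • (U : X)) '' intK (-(U : X)) (A + kerSet M π)
          = (fun y => y - m • (U : X)) ''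
              (A + kerSet M π + {x : X | ∃ t : ℝ, 0 < t ∧ x = t • (U : X)})) ∧
      {x : X | rho M π A x < (m : EReal)}
          ⊆ (fun y => y - m • (U : X)) '' (A + kerSet M π) :=
  stmt_8_general Xpos hXposSmul M π U hUpos hU1 A hAmono
end

section
/- For every m ∈ ℝ, the sublevel set of ρ satisfies {X ∈ 𝒳 : ρ(X) ≤ m} = cl_{−U}(𝒜 + ker π) − m·U = cl_{−U}(𝒜 + ker π) + {t·U : t ≥ 0} − m·U. -/
open Pointwise

/-!
Write `B = 𝒜 + ker π`. Since `π U = 1`, an eligible payoff `Z` with `X + Z ∈ 𝒜` and `π Z ≤ p`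
exists exactly when `X + p • U ∈ B` (trade `Z` against `p • U` inside `ker π`, and use that `𝒜`
is monotone in the direction `U`). Hence `ρ(X) ≤ m` iff `X + r • U ∈ B` for all `r > m`, i.e. iff
`X + m • U` lies in the `(-U)`-directional closure of `B`. That closure is again stable under
adding nonnegative multiples of `U`, which gives the second description.
-/

section RecessionCone

variable {X : Type*} [AddCommGroup X] [Module ℝ X]

lemma mem_recCone_of_add_subset {S P : Set X} {v : X} (hS : S + P ⊆ S)
    (hv : ∀ t : ℝ, 0 ≤ t → t • v ∈ P) : v ∈ recCone S :=
  fun _ hy t ht => hS (Set.add_mem_add hy (hv t ht))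

lemma mem_recCone_add {S : Set X} {v : X} (hv : v ∈ recCone S) (T : Set X) :
    v ∈ recCone (S + T) := by
  rintro _ ⟨s, hs, t, ht, rfl⟩ l hl
  exact add_right_comm s (l • v) t ▸ Set.add_mem_add (hv s hs l hl) ht

lemma mem_recCone_clK {S : Set X} {v : X} (hv : v ∈ recCone S) (K : X) :
    v ∈ recCone (clK K S) := by
  intro y hy l hl ε hε
  obtain ⟨t, ht0, htε, hmem⟩ := hy ε hε
  exact ⟨t, ht0, htε, Set.mem_of_eq_of_mem (by abel) (hv _ hmem l hl)⟩

lemma add_ray_eq_self {S : Set X} {v : X} (hv : v ∈ recCone S) :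
    S + {x : X | ∃ t : ℝ, 0 ≤ t ∧ x = t • v} = S := by
  refine subset_antisymm ?_ fun y hy => ⟨y, hy, 0, ⟨0, le_rfl, by simp⟩, add_zero y⟩
  rintro _ ⟨y, hy, _, ⟨t, ht, rfl⟩, rfl⟩
  exact hv y hy t ht

lemma mem_clK_neg_iff {S : Set X} {u : X} (hu : u ∈ recCone S) (y : X) :
    y ∈ clK (-u) S ↔ ∀ l : ℝ, 0 < l → y + l • u ∈ S := by
  constructor
  · intro hy l hl
    obtain ⟨t, ht0, htl, hmem⟩ := hy l hl
    exact Set.mem_of_eq_of_mem (by module) (hu _ hmem (l - t) (sub_nonneg.2 htl.le))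
  · intro hy l hl
    refine ⟨l / 2, by positivity, by linarith, ?_⟩
    exact Set.mem_of_eq_of_mem (by module) (hy (l / 2) (by positivity))

end RecessionCone

section RiskMeasure

variable {X : Type*} [AddCommGroup X] [Module ℝ X] {M : Submodule ℝ X} {π : M →ₗ[ℝ] ℝ}
  {A : Set X}

lemma rho_le_coe_iff (x : X) (m : ℝ) :
    rho M π A x ≤ m ↔ ∀ r : ℝ, m < r → ∃ Z : M, x + (Z : X) ∈ A ∧ π Z ≤ r := by
  unfold rho
  constructor
  · intro h r hr
    have hlt : _ < (r : EReal) := h.trans_lt (EReal.coe_lt_coe_iff.2 hr)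
    obtain ⟨_, ⟨Z, hZ, rfl⟩, hZr⟩ := sInf_lt_iff.1 hlt
    exact ⟨Z, hZ, (EReal.coe_lt_coe_iff.1 hZr).le⟩
  · intro h
    refine EReal.le_of_forall_lt_iff_le.1 fun r hr => ?_
    obtain ⟨Z, hZ, hZr⟩ := h r (EReal.coe_lt_coe_iff.1 hr)
    refine (sInf_le ?_).trans (EReal.coe_le_coe_iff.2 hZr)
    exact ⟨Z, hZ, rfl⟩

lemma exists_price_le_iff_mem_add_kerSet {U : M} (hU1 : π U = 1) (hUA : (U : X) ∈ recCone A)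
    (x : X) (p : ℝ) :
    (∃ Z : M, x + (Z : X) ∈ A ∧ π Z ≤ p) ↔ x + p • (U : X) ∈ A + kerSet M π := by
  constructor
  · rintro ⟨Z, hZ, hZp⟩
    have hker : ((π Z • U - Z : M) : X) ∈ kerSet M π := by
      refine ⟨π Z • U - Z, ?_, rfl⟩
      simp [hU1]
    refine Set.mem_of_eq_of_mem ?_
      (Set.add_mem_add (hUA _ hZ (p - π Z) (sub_nonneg.2 hZp)) hker)
    push_cast
    module
  · rintro ⟨a, ha, _, ⟨K, hK : π K = 0, rfl⟩, hsum⟩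
    refine ⟨p • U - K, Set.mem_of_eq_of_mem ?_ ha, by simp [hU1, hK]⟩
    rw [← sub_eq_iff_eq_add.2 hsum.symm]
    push_cast
    abel

lemma rho_le_coe_iff_mem_clK {U : M} (hU1 : π U = 1) (hUA : (U : X) ∈ recCone A)
    (x : X) (m : ℝ) :
    rho M π A x ≤ m ↔ x + m • (U : X) ∈ clK (-(U : X)) (A + kerSet M π) := by
  rw [rho_le_coe_iff, mem_clK_neg_iff (mem_recCone_add hUA _)]
  simp only [exists_price_le_iff_mem_add_kerSet hU1 hUA]
  constructor
  · intro h l hl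
    exact Set.mem_of_eq_of_mem (by module) (h (m + l) (by linarith))
  · intro h r hr
    exact Set.mem_of_eq_of_mem (by module) (h (r - m) (by linarith))

end RiskMeasure

theorem stmt_9_general {X : Type*} [AddCommGroup X] [Module ℝ X]
(Xpos : Set X)
    (hXposSmul : ∀ t : ℝ, 0 ≤ t → ∀ x ∈ Xpos, t • x ∈ Xpos)
    (M : Submodule ℝ X) (π : M →ₗ[ℝ] ℝ)
    (U : M) (hUpos : (U : X) ∈ Xpos) (hU1 : π U = 1)
    (A : Set X) (hAmono : A + Xpos ⊆ A) :
    ∀ m : ℝ,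
      ({x : X | rho M π A x ≤ (m : EReal)}
          = (fun y => y - m • (U : X)) '' clK (-(U : X)) (A + kerSet M π)) ∧
      ((fun y => y - m • (U : X)) '' clK (-(U : X)) (A + kerSet M π)
          = (fun y => y - m • (U : X)) ''
              (clK (-(U : X)) (A + kerSet M π) + {x : X | ∃ t : ℝ, 0 ≤ t ∧ x = t • (U : X)})) := by
  intro m
  have hUA : (U : X) ∈ recCone A :=
    mem_recCone_of_add_subset hAmono fun t ht => hXposSmul t ht _ hUpos
  refine ⟨?_, by rw [add_ray_eq_self (mem_recCone_clK (mem_recCone_add hUA _) _)]⟩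
  ext x
  rw [Set.mem_ofPred_eq, rho_le_coe_iff_mem_clK hU1 hUA]
  exact ⟨fun h => ⟨_, h, add_sub_cancel_right x _⟩, by rintro ⟨y, hy, rfl⟩; simpa using hy⟩

theorem stmt_9 {X : Type*} [AddCommGroup X] [Module ℝ X]
(Xpos : Set X)
    (hXpos0 : (0 : X) ∈ Xpos)
    (hXposSmul : ∀ t : ℝ, 0 ≤ t → ∀ x ∈ Xpos, t • x ∈ Xpos)
    (hXposConv : Convex ℝ Xpos)
    (hXposPointed : ∀ x ∈ Xpos, -x ∈ Xpos → x = 0)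
    (M : Submodule ℝ X) (π : M →ₗ[ℝ] ℝ)
    (U : M) (hUpos : (U : X) ∈ Xpos) (hU1 : π U = 1)
    (A : Set X) (hA0 : (0 : X) ∈ A) (hAne : A ≠ Set.univ) (hAmono : A + Xpos ⊆ A) :
    ∀ m : ℝ,
      ({x : X | rho M π A x ≤ (m : EReal)}
          = (fun y => y - m • (U : X)) '' clK (-(U : X)) (A + kerSet M π)) ∧
      ((fun y => y - m • (U : X)) '' clK (-(U : X)) (A + kerSet M π)
          = (fun y => y - m • (U : X)) ''
              (clK (-(U : X)) (A + kerSet M π) + {x : X | ∃ t : ℝ, 0 ≤ t ∧ x = t • (U : X)})) :=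
  stmt_9_general Xpos hXposSmul M π U hUpos hU1 A hAmono
end

section
/- For every m ∈ ℝ, the level line of ρ satisfies {X ∈ 𝒳 : ρ(X) = m} = bd_{−U}(𝒜 + ker π) − m·U. -/
open Pointwise

/-!
Write `B := A + ker π`. Since `π U = 1`, a payoff `Z ∈ ℳ` with `X + Z ∈ A` is the same as a
price `r = π Z` with `X + r • U ∈ B` (the difference `r • U - Z` lies in `ker π`), so `ρ(X)` is
the infimum of the real line set `{r | X + r • U ∈ B}`. Because `U ∈ 𝒳₊` and `A + 𝒳₊ ⊆ A`, this set
is upward closed, and for such a set "`m` is its infimum" says exactly that `X + m • U` is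
`(-U)`-directionally adherent to `B` but not `(-U)`-directionally interior to it.
-/

theorem isGLB_iff_mem_lowerBounds_and_exists_lt_add {α : Type*} [AddCommGroup α] [LinearOrder α]
    [IsOrderedAddMonoid α] {s : Set α} {a : α} :
    IsGLB s a ↔ a ∈ lowerBounds s ∧ ∀ ε > 0, ∃ b ∈ s, b < a + ε := by
  refine ⟨fun h => ⟨h.1, fun ε hε => ?_⟩, fun ⟨hlow, hclose⟩ => ⟨hlow, fun c hc => ?_⟩⟩
  · obtain ⟨b, hb, -, hlt⟩ := h.exists_between_self_add hε
    exact ⟨b, hb, hlt⟩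
  · by_contra! hac
    obtain ⟨b, hb, hlt⟩ := hclose (c - a) (sub_pos.mpr hac)
    exact (hc hb).not_gt (by simpa using hlt)

theorem EReal.sInf_image_coe_eq_coe_iff {s : Set ℝ} {a : ℝ} :
    sInf (((↑) : ℝ → EReal) '' s) = a ↔ IsGLB s a := by
  rw [isGLB_iff_mem_lowerBounds_and_exists_lt_add]
  constructor
  · intro h
    refine ⟨fun b hb => ?_, fun ε hε => ?_⟩
    · exact EReal.coe_le_coe_iff.mp (h ▸ sInf_le (Set.mem_image_of_mem _ hb))
    · have : sInf (((↑) : ℝ → EReal) '' s) < ((a + ε : ℝ) : EReal) := by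
        rw [h]; exact EReal.coe_lt_coe_iff.mpr (by linarith)
      obtain ⟨_, ⟨b, hb, rfl⟩, hlt⟩ := sInf_lt_iff.mp this
      exact ⟨b, hb, EReal.coe_lt_coe_iff.mp hlt⟩
  · rintro ⟨hlow, hclose⟩
    refine sInf_eq_of_forall_ge_of_forall_gt_exists_lt ?_ fun w hw => ?_
    · rintro _ ⟨b, hb, rfl⟩
      exact EReal.coe_le_coe_iff.mpr (hlow hb)
    · obtain ⟨c, hac, hcw⟩ := EReal.exists_between_coe_real hw
      obtain ⟨b, hb, hlt⟩ := hclose (c - a) (by simpa using EReal.coe_lt_coe_iff.mp hac)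
      exact ⟨b, Set.mem_image_of_mem _ hb, (EReal.coe_lt_coe_iff.mpr (by linarith)).trans hcw⟩

section Directional

variable {X : Type*} [AddCommGroup X] [Module ℝ X] {B : Set X} {x v : X} {m : ℝ}

theorem mem_clK_neg_add_smul_iff :
    x + m • v ∈ clK (-v) B ↔ ∀ l > 0, ∃ t, 0 ≤ t ∧ t < l ∧ x + (m + t) • v ∈ B := by
  simp only [clK, Set.mem_ofPred_eq, smul_neg, sub_neg_eq_add, add_assoc, add_smul]

theorem mem_intK_neg_add_smul_iff (hv : v ∈ recCone B) :
    x + m • v ∈ intK (-v) B ↔ ∃ r < m, x + r • v ∈ B := by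
  have hline : ∀ t : ℝ, x + m • v + t • -v = x + (m - t) • v := fun t => by module
  simp only [intK, Set.mem_ofPred_eq, hline]
  constructor
  · rintro ⟨l, hl, h⟩
    exact ⟨m - l, by linarith, h l hl.le le_rfl⟩
  · rintro ⟨r, hrm, hr⟩
    refine ⟨m - r, sub_pos.mpr hrm, fun t _ htl => ?_⟩
    have := hv _ hr (m - t - r) (by linarith)
    rwa [add_assoc, ← add_smul, add_sub_cancel] at this

theorem mem_bdK_neg_add_smul_iff_isGLB (hv : v ∈ recCone B) :
    x + m • v ∈ bdK (-v) B ↔ IsGLB {r : ℝ | x + r • v ∈ B} m := by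
  have hlow : x + m • v ∉ intK (-v) B ↔ m ∈ lowerBounds {r : ℝ | x + r • v ∈ B} := by
    simp only [mem_intK_neg_add_smul_iff hv, mem_lowerBounds, Set.mem_ofPred_eq, not_exists,
      not_and]
    exact forall_congr' fun r => imp_not_comm.trans (imp_congr_right fun _ => not_lt)
  rw [bdK, Set.mem_sdiff, hlow, mem_clK_neg_add_smul_iff,
    isGLB_iff_mem_lowerBounds_and_exists_lt_add, and_comm]
  refine and_congr_right fun hm => forall₂_congr fun l _ => ⟨?_, ?_⟩
  · rintro ⟨t, -, htl, ht⟩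
    exact ⟨m + t, ht, by linarith⟩
  · rintro ⟨r, hr, hrl⟩
    exact ⟨r - m, sub_nonneg.mpr (hm hr), by linarith, by rwa [add_sub_cancel]⟩

end Directional

theorem mem_recCone_add_of_add_subset {X : Type*} [AddCommGroup X] [Module ℝ X]
    {A P K : Set X} {v : X} (hA : A + P ⊆ A) (hv : ∀ t : ℝ, 0 ≤ t → t • v ∈ P) :
    v ∈ recCone (A + K) := by
  rintro _ ⟨a, ha, k, hk, rfl⟩ t ht
  exact ⟨a + t • v, hA (Set.add_mem_add ha (hv t ht)), k, hk, add_right_comm _ _ _⟩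

theorem rho_eq_sInf_line {X : Type*} [AddCommGroup X] [Module ℝ X]
    (M : Submodule ℝ X) (π : M →ₗ[ℝ] ℝ) (U : M) (hU1 : π U = 1) (A : Set X) (x : X) :
    rho M π A x = sInf (((↑) : ℝ → EReal) '' {r : ℝ | x + r • (U : X) ∈ A + kerSet M π}) := by
  unfold rho
  congr 1
  ext r
  constructor
  · rintro ⟨Z, hZ, rfl⟩
    refine ⟨π Z, ⟨x + Z, hZ, _, ⟨π Z • U - Z, by simp [hU1], rfl⟩, ?_⟩, rfl⟩
    push_cast
    abel
  · rintro ⟨r, ⟨a, ha, _, ⟨W, hW, rfl⟩, heq⟩, rfl⟩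
    refine ⟨r • U - W, ?_, by simp [hU1, show π W = 0 from hW]⟩
    convert ha using 1
    push_cast
    rw [← add_sub_assoc, ← heq, add_sub_cancel_right]

theorem stmt_10_general {X : Type*} [AddCommGroup X] [Module ℝ X]
(Xpos : Set X)
    (hXposSmul : ∀ t : ℝ, 0 ≤ t → ∀ x ∈ Xpos, t • x ∈ Xpos)
    (M : Submodule ℝ X) (π : M →ₗ[ℝ] ℝ)
    (U : M) (hUpos : (U : X) ∈ Xpos) (hU1 : π U = 1)
    (A : Set X) (hAmono : A + Xpos ⊆ A) :
    ∀ m : ℝ,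
      {x : X | rho M π A x = (m : EReal)}
        = (fun y => y - m • (U : X)) '' bdK (-(U : X)) (A + kerSet M π) := by
  intro m
  ext x
  have hU : (U : X) ∈ recCone (A + kerSet M π) :=
    mem_recCone_add_of_add_subset hAmono fun t ht => hXposSmul t ht _ hUpos
  rw [Set.mem_ofPred_eq, rho_eq_sInf_line M π U hU1, EReal.sInf_image_coe_eq_coe_iff,
    ← mem_bdK_neg_add_smul_iff_isGLB hU]
  exact ⟨fun h => ⟨_, h, add_sub_cancel_right _ _⟩, by rintro ⟨y, hy, rfl⟩; simpa using hy⟩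

theorem stmt_10 {X : Type*} [AddCommGroup X] [Module ℝ X]
(Xpos : Set X)
    (hXpos0 : (0 : X) ∈ Xpos)
    (hXposSmul : ∀ t : ℝ, 0 ≤ t → ∀ x ∈ Xpos, t • x ∈ Xpos)
    (hXposConv : Convex ℝ Xpos)
    (hXposPointed : ∀ x ∈ Xpos, -x ∈ Xpos → x = 0)
    (M : Submodule ℝ X) (π : M →ₗ[ℝ] ℝ)
    (U : M) (hUpos : (U : X) ∈ Xpos) (hU1 : π U = 1)
    (A : Set X) (hA0 : (0 : X) ∈ A) (hAne : A ≠ Set.univ) (hAmono : A + Xpos ⊆ A) :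
    ∀ m : ℝ,
      {x : X | rho M π A x = (m : EReal)}
        = (fun y => y - m • (U : X)) '' bdK (-(U : X)) (A + kerSet M π) :=
  stmt_10_general Xpos hXposSmul M π U hUpos hU1 A hAmono
end

section
/- The epigraph of ρ satisfies epi ρ = {(X, m) ∈ 𝒳 × ℝ : X ∈ cl_{−U}(𝒜 + ker π) − m·U}. -/
open Pointwise

theorem stmt_11 {X : Type*} [AddCommGroup X] [Module ℝ X]
(Xpos : Set X)
    (hXpos0 : (0 : X) ∈ Xpos)
    (hXposSmul : ∀ t : ℝ, 0 ≤ t → ∀ x ∈ Xpos, t • x ∈ Xpos)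
    (hXposConv : Convex ℝ Xpos)
    (hXposPointed : ∀ x ∈ Xpos, -x ∈ Xpos → x = 0)
    (M : Submodule ℝ X) (π : M →ₗ[ℝ] ℝ)
    (U : M) (hUpos : (U : X) ∈ Xpos) (hU1 : π U = 1)
    (A : Set X) (hA0 : (0 : X) ∈ A) (hAne : A ≠ Set.univ) (hAmono : A + Xpos ⊆ A) :
    {p : X × ℝ | rho M π A p.1 ≤ (p.2 : EReal)}
      = {p : X × ℝ | p.1 ∈ (fun y => y - p.2 • (U : X)) '' clK (-(U : X)) (A + kerSet M π)} := by
  ext ⟨x, m⟩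
  simp only [Set.mem_setOf_eq, Set.mem_image]
  constructor
  · intro h
    refine ⟨x + m • (U : X), ?_, by abel⟩
    intro l hl
    have hlt : rho M π A x < ((m + l : ℝ) : EReal) :=
      lt_of_le_of_lt h (by exact_mod_cast (by linarith : m < m + l))
    rw [rho] at hlt
    obtain ⟨r, ⟨Z, hZA, hr⟩, hrlt⟩ := sInf_lt_iff.mp hlt
    rw [← hr] at hrlt
    have hπ : π Z < m + l := by exact_mod_cast hrlt
    by_cases hc : m ≤ π Z
    · refine ⟨π Z - m, by linarith, by linarith, ?_⟩
      rw [Set.mem_add]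
      refine ⟨x + (Z : X), hZA, (π Z) • (U : X) - (Z : X), ?_, ?_⟩
      · exact ⟨(π Z) • U - Z, by simp [hU1], by simp⟩
      · module
    · push_neg at hc
      refine ⟨0, le_rfl, hl, ?_⟩
      rw [Set.mem_add]
      refine ⟨x + (Z : X) + (m - π Z) • (U : X), ?_, (π Z) • (U : X) - (Z : X), ?_, ?_⟩
      · exact hAmono (Set.add_mem_add hZA (hXposSmul _ (by linarith) _ hUpos))
      · exact ⟨(π Z) • U - Z, by simp [hU1], by simp⟩
      · module
  · rintro ⟨y, hy, hyx⟩
    have hy' : y = x + m • (U : X) := by rw [← hyx]; abel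
    subst hy'
    by_contra hlt
    push_neg at hlt
    obtain ⟨c, hc1, hc2⟩ := EReal.lt_iff_exists_real_btwn.mp hlt
    have hmc : m < c := by exact_mod_cast hc1
    obtain ⟨t, ht0, htl, hmem⟩ := hy (c - m) (by linarith)
    rw [Set.mem_add] at hmem
    obtain ⟨a, ha, k, hk, hsum⟩ := hmem
    obtain ⟨Z', hZ'0, hZ'k⟩ := hk
    have hval : ((m + t : ℝ) : EReal) ∈
        {r : EReal | ∃ Z : M, x + (Z : X) ∈ A ∧ ((π Z : ℝ) : EReal) = r} := by
      refine ⟨(m + t) • U - Z', ?_, ?_⟩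
      · have : x + ((m + t) • (U : X) - (Z' : X)) = a := by
          rw [← hZ'k] at hsum
          have ha' : a = x + m • (U : X) - t • (-(U : X)) - (Z' : X) :=
            eq_sub_of_add_eq hsum
          rw [ha']
          module
        simp only [Submodule.coe_sub, Submodule.coe_smul]
        rw [this]
        exact ha
      · have h0 : π Z' = 0 := hZ'0
        simp [hU1, h0]
    have hle : rho M π A x ≤ ((m + t : ℝ) : EReal) := sInf_le hval
    have : ((m + t : ℝ) : EReal) < (c : EReal) := by exact_mod_cast (by linarith : m + t < c)
    exact absurd (lt_of_le_of_lt hle this) (not_lt.mpr hc2.le)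
end

section
/- For every m ∈ ℝ: (i) {X ∈ 𝒳 : ρ(X) ≤ m} ⊇ 𝒜 + ker π − m·U; (ii) the equality {X ∈ 𝒳 : ρ(X) ≤ m} = 𝒜 + ker π − m·U holds if and only if 𝒜 + ker π is (−U)-directionally closed. -/
open Pointwise

lemma rho_le_iff_aux {X : Type*} [AddCommGroup X] [Module ℝ X]
    (Xpos : Set X)
    (hXposSmul : ∀ t : ℝ, 0 ≤ t → ∀ x ∈ Xpos, t • x ∈ Xpos)
    (M : Submodule ℝ X) (π : M →ₗ[ℝ] ℝ)
    (U : M) (hUpos : (U : X) ∈ Xpos) (hU1 : π U = 1)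
    (A : Set X) (hAmono : A + Xpos ⊆ A) (m : ℝ) (x : X) :
    rho M π A x ≤ (m : EReal) ↔ x + m • (U : X) ∈ clK (-(U : X)) (A + kerSet M π) := by
  constructor
  · intro h l hl
    have hlt : sInf {r : EReal | ∃ Z : M, x + (Z : X) ∈ A ∧ ((π Z : ℝ) : EReal) = r}
        < ((m + l : ℝ) : EReal) := by
      refine lt_of_le_of_lt h ?_
      exact_mod_cast (lt_add_of_pos_right m hl)
    rw [sInf_lt_iff] at hlt
    obtain ⟨r, ⟨Z, hZA, hZr⟩, hrlt⟩ := hlt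
    subst hZr
    have hc : π Z < m + l := by exact_mod_cast hrlt
    set c : ℝ := π Z with hcdef
    refine ⟨max (c - m) 0, le_max_right _ _, ?_, ?_⟩
    · rcases max_cases (c - m) 0 with ⟨h1, h2⟩ | ⟨h1, h2⟩ <;> rw [h1] <;> linarith
    · set t : ℝ := max (c - m) 0 with htdef
      have hs : (0 : ℝ) ≤ m + t - c := by
        rcases max_cases (c - m) 0 with ⟨h1, h2⟩ | ⟨h1, h2⟩ <;> rw [htdef, h1] <;> linarith
      rw [Set.mem_add]
      refine ⟨x + (Z : X) + (m + t - c) • (U : X),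
        hAmono (Set.add_mem_add hZA (hXposSmul _ hs _ hUpos)),
        ((c • U - Z : M) : X), ⟨c • U - Z, ?_, rfl⟩, ?_⟩
      · show π (c • U - Z) = 0
        rw [map_sub, map_smul, hU1]
        simp [← hcdef]
      · push_cast
        module
  · intro h
    refine le_of_not_gt fun hlt => ?_
    obtain ⟨c, hmc, hcInf⟩ := EReal.exists_between_coe_real hlt
    have hcm : m < c := by exact_mod_cast hmc
    obtain ⟨t, ht0, htl, htm⟩ := h (c - m) (by linarith)
    rw [Set.mem_add] at htm
    obtain ⟨a, haA, k, ⟨Z₀, hZ₀, rfl⟩, hsum⟩ := htm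
    have hZ₀' : π Z₀ = 0 := hZ₀
    have hmem : ((m + t : ℝ) : EReal) ∈
        {r : EReal | ∃ Z : M, x + (Z : X) ∈ A ∧ ((π Z : ℝ) : EReal) = r} := by
      refine ⟨(m + t) • U - Z₀, ?_, by rw [map_sub, map_smul, hU1, hZ₀']; norm_num⟩
      have h2 : a + (Z₀ : X) = x + m • (U : X) - t • (-(U : X)) := hsum
      rw [smul_neg, sub_neg_eq_add] at h2
      have h3 : x + (((m + t) • U - Z₀ : M) : X) = a := by
        push_cast
        rw [add_smul]
        linear_combination (norm := module) -h2
      rw [h3]; exact haA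
    have h4 : (c : EReal) < ((m + t : ℝ) : EReal) := lt_of_lt_of_le hcInf (sInf_le hmem)
    have : c < m + t := by exact_mod_cast h4
    linarith

theorem stmt_12 {X : Type*} [AddCommGroup X] [Module ℝ X]
(Xpos : Set X)
    (hXpos0 : (0 : X) ∈ Xpos)
    (hXposSmul : ∀ t : ℝ, 0 ≤ t → ∀ x ∈ Xpos, t • x ∈ Xpos)
    (hXposConv : Convex ℝ Xpos)
    (hXposPointed : ∀ x ∈ Xpos, -x ∈ Xpos → x = 0)
    (M : Submodule ℝ X) (π : M →ₗ[ℝ] ℝ)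
    (U : M) (hUpos : (U : X) ∈ Xpos) (hU1 : π U = 1)
    (A : Set X) (hA0 : (0 : X) ∈ A) (hAne : A ≠ Set.univ) (hAmono : A + Xpos ⊆ A) :
    ∀ m : ℝ,
      ((fun y => y - m • (U : X)) '' (A + kerSet M π)
          ⊆ {x : X | rho M π A x ≤ (m : EReal)}) ∧
      ({x : X | rho M π A x ≤ (m : EReal)} = (fun y => y - m • (U : X)) '' (A + kerSet M π)
          ↔ A + kerSet M π = clK (-(U : X)) (A + kerSet M π)) := by
  intro m
  have key : ∀ x : X, rho M π A x ≤ (m : EReal) ↔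
      x + m • (U : X) ∈ clK (-(U : X)) (A + kerSet M π) :=
    rho_le_iff_aux Xpos hXposSmul M π U hUpos hU1 A hAmono m
  have hsub : A + kerSet M π ⊆ clK (-(U : X)) (A + kerSet M π) := by
    intro y hy l hl
    exact ⟨0, le_refl 0, hl, by simpa using hy⟩
  have part1 : (fun y => y - m • (U : X)) '' (A + kerSet M π)
      ⊆ {x : X | rho M π A x ≤ (m : EReal)} := by
    rintro _ ⟨y, hy, rfl⟩
    simp only [Set.mem_setOf_eq]
    rw [key]
    simpa using hsub hy
  refine ⟨part1, ?_, ?_⟩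
  · intro heq
    refine le_antisymm hsub ?_
    intro x hx
    have hx' : x - m • (U : X) ∈ {x : X | rho M π A x ≤ (m : EReal)} := by
      simp only [Set.mem_setOf_eq]
      rw [key]; simpa using hx
    rw [heq] at hx'
    obtain ⟨y, hy, hyx⟩ := hx'
    have hxy : y = x := sub_left_inj.mp hyx
    rwa [← hxy]
  · intro hcl
    refine Set.Subset.antisymm ?_ part1
    intro x hx
    have hmem : x + m • (U : X) ∈ A + kerSet M π := by
      rw [hcl]; exact (key x).mp hx
    exact ⟨x + m • (U : X), hmem, by simp⟩
end

section
/- Suppose (𝒳, ‖·‖) is a real normed vector space and ρ is finite-valued (ρ : 𝒳 → ℝ) and continuous on 𝒳. Then: (i) int_{−U}(𝒜 + ker π) = int(𝒜 + ker π); (ii) cl_{−U}(𝒜 + ker π) = cl(𝒜 + ker π); (iii) bd_{−U}(𝒜 + ker π) = bd(𝒜 + ker π), where int, cl, bd denote the topological interior, closure and boundary in 𝒳. -/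
open Pointwise

theorem stmt_13 {X : Type*} [NormedAddCommGroup X] [NormedSpace ℝ X]
(Xpos : Set X)
    (hXpos0 : (0 : X) ∈ Xpos)
    (hXposSmul : ∀ t : ℝ, 0 ≤ t → ∀ x ∈ Xpos, t • x ∈ Xpos)
    (hXposConv : Convex ℝ Xpos)
    (hXposPointed : ∀ x ∈ Xpos, -x ∈ Xpos → x = 0)
    (M : Submodule ℝ X) (π : M →ₗ[ℝ] ℝ)
    (U : M) (hUpos : (U : X) ∈ Xpos) (hU1 : π U = 1)
    (A : Set X) (hA0 : (0 : X) ∈ A) (hAne : A ≠ Set.univ) (hAmono : A + Xpos ⊆ A)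
    (f : X → ℝ) (hf : Continuous f)
    (hrho : ∀ x : X, rho M π A x = ((f x : ℝ) : EReal)) :
    intK (-(U : X)) (A + kerSet M π) = interior (A + kerSet M π) ∧
    clK (-(U : X)) (A + kerSet M π) = closure (A + kerSet M π) ∧
    bdK (-(U : X)) (A + kerSet M π) = frontier (A + kerSet M π) := by
  set S := A + kerSet M π with hSdef
  -- membership characterization
  have hmemS : ∀ x : X, x ∈ S ↔ ∃ Z : M, π Z = 0 ∧ x + (Z : X) ∈ A := by
    intro x
    constructor
    · rintro ⟨a, ha, z, ⟨Z, hZ0, rfl⟩, rfl⟩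
      exact ⟨-Z, by simpa using hZ0, by simp only [NegMemClass.coe_neg]; rw [add_neg_cancel_right]; exact ha⟩
    · rintro ⟨Z, hZ0, hxZ⟩
      exact ⟨x + (Z : X), hxZ, -(Z : X), ⟨-Z, by simpa using hZ0, by simp only [NegMemClass.coe_neg]⟩, add_neg_cancel_right x (Z : X)⟩
  -- key inequality
  have key : ∀ (x : X) (t : ℝ), f (x + t • (U : X)) + t ≤ f x := by
    intro x t
    have h : ((f (x + t • (U : X)) + t : ℝ) : EReal) ≤ ((f x : ℝ) : EReal) := by
      rw [← hrho x]
      apply le_sInf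
      rintro r ⟨Z, hZA, rfl⟩
      have hW : rho M π A (x + t • (U : X)) ≤ ((π Z - t : ℝ) : EReal) := by
        apply sInf_le
        refine ⟨Z - t • U, ?_, by simp [map_sub, map_smul, hU1]⟩
        have hc : ((Z - t • U : M) : X) = (Z : X) - t • (U : X) := by push_cast; ring
        rw [hc]
        have : x + t • (U : X) + ((Z : X) - t • (U : X)) = x + (Z : X) := by abel
        rwa [this]
      rw [hrho] at hW
      have hW' : f (x + t • (U : X)) ≤ π Z - t := by exact_mod_cast hW
      exact_mod_cast (by linarith : f (x + t • (U : X)) + t ≤ π Z)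
    exact_mod_cast h
  have trans : ∀ (x : X) (t : ℝ), f (x + t • (U : X)) = f x - t := by
    intro x t
    have h1 := key x t
    have h2 := key (x + t • (U : X)) (-t)
    have he : x + t • (U : X) + (-t) • (U : X) = x := by
      rw [neg_smul]; abel
    rw [he] at h2
    linarith
  have hSub1 : ∀ x ∈ S, f x ≤ 0 := by
    intro x hx
    obtain ⟨Z, hZ0, hxZ⟩ := (hmemS x).1 hx
    have : rho M π A x ≤ ((0 : ℝ) : EReal) :=
      sInf_le ⟨Z, hxZ, by rw [hZ0]⟩
    rw [hrho] at this
    exact_mod_cast this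
  have hSub2 : ∀ x : X, f x < 0 → x ∈ S := by
    intro x hx
    have h0 : rho M π A x < ((0 : ℝ) : EReal) := by
      rw [hrho]; exact_mod_cast hx
    obtain ⟨r, ⟨Z, hZA, rfl⟩, hr⟩ := sInf_lt_iff.mp h0
    have hZneg : π Z < 0 := by exact_mod_cast hr
    refine (hmemS x).2 ⟨Z + (-(π Z)) • U, by simp [map_add, map_smul, hU1], ?_⟩
    have hc : ((Z + (-(π Z)) • U : M) : X) = (Z : X) + (-(π Z)) • (U : X) := by
      push_cast; ring
    rw [hc]
    have : x + ((Z : X) + (-(π Z)) • (U : X))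
        = (x + (Z : X)) + (-(π Z)) • (U : X) := by abel
    rw [this]
    exact hAmono (Set.add_mem_add hZA (hXposSmul _ (by linarith) _ hUpos))
  -- positive t in any nbhd of 0
  have hposnhds : ∀ V ∈ nhds (0 : ℝ), ∃ t : ℝ, 0 < t ∧ t ∈ V := by
    intro V hV
    obtain ⟨ε, hε, hball⟩ := Metric.mem_nhds_iff.mp hV
    refine ⟨ε / 2, by linarith, hball ?_⟩
    rw [Metric.mem_ball, dist_zero_right, Real.norm_eq_abs, abs_of_pos (by linarith)]
    linarith
  have hcontU : ∀ x : X, Continuous fun t : ℝ => x + t • (U : X) :=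
    fun x => continuous_const.add (continuous_id.smul continuous_const)
  -- interior = {f < 0}
  have hint : interior S = {x : X | f x < 0} := by
    apply Set.Subset.antisymm
    · intro x hx
      have hnb : (fun t : ℝ => x + t • (-(U : X))) ⁻¹' interior S ∈ nhds (0 : ℝ) := by
        apply (hcontU x |>.comp continuous_neg |>.congr ?_).continuousAt.preimage_mem_nhds
        · simpa using mem_interior_iff_mem_nhds.mp hx
        · intro t; simp [smul_neg, neg_smul]
      obtain ⟨t, ht, htV⟩ := hposnhds _ hnb
      have hmem : x + t • (-(U : X)) ∈ S := interior_subset htV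
      have : x + t • (-(U : X)) = x + (-t) • (U : X) := by
        rw [smul_neg, neg_smul]
      rw [this] at hmem
      have := hSub1 _ hmem
      rw [trans] at this
      show f x < 0
      linarith
    · exact interior_maximal (fun x hx => hSub2 x hx) (isOpen_lt hf continuous_const)
  have hcl : closure S = {x : X | f x ≤ 0} := by
    apply Set.Subset.antisymm
    · exact closure_minimal (fun x hx => hSub1 x hx) (isClosed_le hf continuous_const)
    · intro x hx
      rw [mem_closure_iff_nhds]
      intro N hN
      have hnb : (fun t : ℝ => x + t • (U : X)) ⁻¹' N ∈ nhds (0 : ℝ) := by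
        apply (hcontU x).continuousAt.preimage_mem_nhds
        simpa using hN
      obtain ⟨t, ht, htV⟩ := hposnhds _ hnb
      refine ⟨x + t • (U : X), htV, hSub2 _ ?_⟩
      rw [trans]
      have : f x ≤ 0 := hx
      linarith
  have hintK : intK (-(U : X)) S = {x : X | f x < 0} := by
    apply Set.Subset.antisymm
    · rintro x ⟨l, hl, hx⟩
      have hmem := hx l hl.le le_rfl
      have heq : x + l • (-(U : X)) = x + (-l) • (U : X) := by rw [smul_neg, neg_smul]
      rw [heq] at hmem
      have h := hSub1 _ hmem
      rw [trans] at h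
      show f x < 0
      linarith
    · intro x hx
      refine ⟨-f x / 2, by simp at hx ⊢; linarith, ?_⟩
      intro t ht htl
      have : x + t • (-(U : X)) = x + (-t) • (U : X) := by rw [smul_neg, neg_smul]
      rw [this]
      apply hSub2
      rw [trans]
      have : f x < 0 := hx
      linarith
  have hclK : clK (-(U : X)) S = {x : X | f x ≤ 0} := by
    apply Set.Subset.antisymm
    · intro x hx
      by_contra hpos
      have hpos' : 0 < f x := by simpa using lt_of_not_ge (by simpa using hpos)
      obtain ⟨t, ht0, htl, hmem⟩ := hx (f x) hpos'
      have : x - t • (-(U : X)) = x + t • (U : X) := by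
        rw [smul_neg, sub_neg_eq_add]
      rw [this] at hmem
      have := hSub1 _ hmem
      rw [trans] at this
      linarith
    · intro x hx
      intro l hl
      refine ⟨l / 2, by linarith, by linarith, ?_⟩
      have : x - (l / 2) • (-(U : X)) = x + (l / 2) • (U : X) := by
        rw [smul_neg, sub_neg_eq_add]
      rw [this]
      apply hSub2
      rw [trans]
      have : f x ≤ 0 := hx
      linarith
  refine ⟨by rw [hintK, hint], by rw [hclK, hcl], ?_⟩
  show clK (-(U : X)) S \ intK (-(U : X)) S = closure S \ interior S
  rw [hclK, hcl, hintK, hint]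
end

section
/- Suppose (𝒳, ‖·‖) is a real normed vector space and the set 𝒜 + ker π satisfies both (a) 𝒜 + ker π + {t·U : t > 0} ⊆ int(𝒜 + ker π) and (b) cl(𝒜 + ker π) + {t·U : t > 0} ⊆ 𝒜 + ker π. Then: (i) int_{−U}(𝒜 + ker π) = int(𝒜 + ker π); (ii) cl_{−U}(𝒜 + ker π) = cl(𝒜 + ker π); (iii) bd_{−U}(𝒜 + ker π) = bd(𝒜 + ker π), where int, cl, bd denote the topological interior, closure and boundary in 𝒳. -/
open Pointwise

theorem stmt_14 {X : Type*} [NormedAddCommGroup X] [NormedSpace ℝ X]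
(Xpos : Set X)
    (hXpos0 : (0 : X) ∈ Xpos)
    (hXposSmul : ∀ t : ℝ, 0 ≤ t → ∀ x ∈ Xpos, t • x ∈ Xpos)
    (hXposConv : Convex ℝ Xpos)
    (hXposPointed : ∀ x ∈ Xpos, -x ∈ Xpos → x = 0)
    (M : Submodule ℝ X) (π : M →ₗ[ℝ] ℝ)
    (U : M) (hUpos : (U : X) ∈ Xpos) (hU1 : π U = 1)
    (A : Set X) (hA0 : (0 : X) ∈ A) (hAne : A ≠ Set.univ) (hAmono : A + Xpos ⊆ A)
    (ha : A + kerSet M π + {y : X | ∃ t : ℝ, 0 < t ∧ y = t • (U : X)}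
            ⊆ interior (A + kerSet M π))
    (hb : closure (A + kerSet M π) + {y : X | ∃ t : ℝ, 0 < t ∧ y = t • (U : X)}
            ⊆ A + kerSet M π) :
    intK (-(U : X)) (A + kerSet M π) = interior (A + kerSet M π) ∧
    clK (-(U : X)) (A + kerSet M π) = closure (A + kerSet M π) ∧
    bdK (-(U : X)) (A + kerSet M π) = frontier (A + kerSet M π) := by

  set B := A + kerSet M π with hB
  have hUnorm : (0:ℝ) < ‖(U:X)‖ + 1 := by positivity
  have hint : intK (-(U : X)) B = interior B := by
    ext x
    constructor
    · rintro ⟨l, hl, hmem⟩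
      have h1 : x - l • (U : X) ∈ B := by
        have := hmem l hl.le le_rfl
        simpa [smul_neg, ← sub_eq_add_neg] using this
      have h2 := ha (Set.add_mem_add h1 ⟨l, hl, rfl⟩)
      simpa using h2
    · intro hx
      obtain ⟨ε, hε, hball⟩ := Metric.isOpen_iff.mp isOpen_interior x hx
      refine ⟨ε / (2 * (‖(U:X)‖ + 1)), by positivity, ?_⟩
      intro t ht htl
      have hmemball : x + t • (-(U:X)) ∈ Metric.ball x ε := by
        rw [Metric.mem_ball, dist_eq_norm]
        have heq : ‖x + t • (-(U:X)) - x‖ = t * ‖(U:X)‖ := by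
          simp [norm_smul, abs_of_nonneg ht]
        rw [heq]
        have h4 : ε / (2 * (‖(U:X)‖ + 1)) * (‖(U:X)‖ + 1) = ε / 2 := by
          field_simp
        have h5 := mul_le_mul_of_nonneg_right htl (le_of_lt hUnorm)
        rw [h4] at h5
        nlinarith [norm_nonneg (U:X)]
      exact interior_subset (hball hmemball)
  have hcl : clK (-(U : X)) B = closure B := by
    ext x
    constructor
    · intro hx
      rw [Metric.mem_closure_iff]
      intro ε hε
      obtain ⟨t, ht0, htl, hmem⟩ := hx (ε / (‖(U:X)‖ + 1)) (by positivity)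
      refine ⟨x - t • (-(U:X)), hmem, ?_⟩
      rw [dist_eq_norm]
      have heq : ‖x - (x - t • (-(U:X)))‖ = t * ‖(U:X)‖ := by
        simp [norm_smul, abs_of_nonneg ht0]
      rw [heq]
      have h3 := mul_lt_mul_of_pos_right htl hUnorm
      rw [div_mul_cancel₀ ε (ne_of_gt hUnorm)] at h3
      nlinarith [norm_nonneg (U:X)]
    · intro hx l hl
      refine ⟨l/2, by linarith, by linarith, ?_⟩
      have heq : x - (l/2) • (-(U:X)) = x + (l/2) • (U:X) := by
        simp [smul_neg]
      rw [heq]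
      exact hb (Set.add_mem_add hx ⟨l/2, by linarith, rfl⟩)
  refine ⟨hint, hcl, ?_⟩
  simp only [bdK, frontier, hcl, hint]
end

section
/- Let 𝒜_ρ := {X ∈ 𝒳 : ρ(X) ≤ 0}. Then: (i) for every m ∈ ℝ, {X ∈ 𝒳 : ρ(X) ≤ m} = 𝒜_ρ − m·U; (ii) 𝒜_ρ is (−U)-directionally closed; (iii) for every X ∈ 𝒳, inf{π(Z) : Z ∈ ℳ, X + Z ∈ 𝒜_ρ} = ρ(X), i.e. the risk measure associated with the acceptance set 𝒜_ρ coincides with ρ on all of 𝒳. -/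
open Pointwise

/-!
Cash additivity, `ρ(x + Z) = ρ(x) - π(Z)` for `Z ∈ M`, is the whole argument. With `Z = c • U`
it shows that `{ρ ≤ m}` is the translate of `{ρ ≤ 0}` by `-m • U` and that membership of
`x + t • U` in `{ρ ≤ m}` means `ρ(x) ≤ m + t`, whence directional closedness along `-U`. With
general `Z` it shows `x + Z ∈ {ρ ≤ 0} ↔ ρ(x) ≤ π(Z)`; since `π` is onto `ℝ`, the infimum of these
`π(Z)` is `ρ(x)`.
-/

namespace EReal

lemma sub_coe_le_iff {a b : EReal} {c : ℝ} : a - c ≤ b ↔ a ≤ b + c :=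
  sub_le_iff_le_add (.inl (coe_ne_bot c)) (.inl (coe_ne_top c))

noncomputable def subCoeOrderIso (c : ℝ) : EReal ≃o EReal where
  toFun a := a - c
  invFun a := a + c
  left_inv _ := sub_add_cancel
  right_inv _ := add_sub_cancel_right
  map_rel_iff' := by
    simp only [Equiv.coe_fn_mk, sub_coe_le_iff, sub_add_cancel, implies_true]

lemma sInf_image_sub_coe (S : Set EReal) (c : ℝ) :
    sInf ((· - (c : EReal)) '' S) = sInf S - c := by
  rw [sInf_image]
  exact ((subCoeOrderIso c).map_sInf S).symm

end EReal

section CashAdditivity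

variable {X : Type*} [AddCommGroup X] [Module ℝ X] {M : Submodule ℝ X} {π : M →ₗ[ℝ] ℝ}
  {A : Set X}

theorem rho_add_coe (x : X) (Z : M) : rho M π A (x + Z) = rho M π A x - π Z := by
  unfold rho
  rw [← EReal.sInf_image_sub_coe]
  congr 1
  ext r
  constructor
  · rintro ⟨W, hW, rfl⟩
    refine ⟨π (Z + W), ⟨Z + W, by rwa [Submodule.coe_add, ← add_assoc], rfl⟩, ?_⟩
    rw [map_add, EReal.coe_add]
    exact EReal.add_sub_cancel_left
  · rintro ⟨_, ⟨V, hV, rfl⟩, rfl⟩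
    refine ⟨V - Z, by rwa [Submodule.coe_sub, add_assoc, add_sub_cancel], ?_⟩
    rw [map_sub, EReal.coe_sub]

theorem rho_add_smul {U : M} (hU : π U = 1) (x : X) (c : ℝ) :
    rho M π A (x + c • (U : X)) = rho M π A x - c := by
  simpa [hU] using rho_add_coe (π := π) (A := A) x (c • U)

theorem rho_add_coe_le_zero_iff (x : X) (Z : M) :
    rho M π A (x + Z) ≤ 0 ↔ rho M π A x ≤ π Z := by
  rw [rho_add_coe, EReal.sub_coe_le_iff, zero_add]

theorem setOf_rho_le_eq_image_sub_smul {U : M} (hU : π U = 1) (m : ℝ) :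
    {x | rho M π A x ≤ m} = (fun y => y - m • (U : X)) '' {x | rho M π A x ≤ 0} := by
  ext x
  have hshift : rho M π A (x + m • (U : X)) ≤ 0 ↔ rho M π A x ≤ m := by
    rw [rho_add_smul hU, EReal.sub_coe_le_iff, zero_add]
  refine ⟨fun hx => ⟨x + m • (U : X), hshift.2 hx, add_sub_cancel_right _ _⟩, ?_⟩
  rintro ⟨y, hy, rfl⟩
  exact hshift.1 (by rwa [sub_add_cancel])

theorem subset_clK (K : X) (S : Set X) : S ⊆ clK K S :=
  fun x hx _ hl => ⟨0, le_rfl, hl, by rwa [zero_smul, sub_zero]⟩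

theorem clK_neg_setOf_rho_le {U : M} (hU : π U = 1) (m : ℝ) :
    clK (-(U : X)) {x | rho M π A x ≤ m} = {x | rho M π A x ≤ m} := by
  refine (subset_clK _ _).antisymm' fun x hx => ?_
  refine EReal.le_of_forall_lt_iff_le.1 fun z hz => ?_
  obtain ⟨t, -, htz, hxt⟩ := hx (z - m) (sub_pos.2 (EReal.coe_lt_coe_iff.1 hz))
  rw [Set.mem_ofPred_eq, smul_neg, sub_neg_eq_add, rho_add_smul hU, EReal.sub_coe_le_iff,
    ← EReal.coe_add] at hxt
  exact hxt.trans (EReal.coe_le_coe_iff.2 (by linarith))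

theorem rho_setOf_rho_le_zero {U : M} (hU : π U = 1) (x : X) :
    rho M π {y | rho M π A y ≤ 0} x = rho M π A x := by
  refine le_antisymm (EReal.le_of_forall_lt_iff_le.1 fun z hz => ?_) (le_sInf ?_)
  · refine sInf_le ⟨z • U, ?_, by simp [hU]⟩
    rw [Set.mem_ofPred_eq, rho_add_coe_le_zero_iff]
    simpa [hU] using hz.le
  · rintro _ ⟨Z, hZ, rfl⟩
    exact (rho_add_coe_le_zero_iff x Z).1 hZ

end CashAdditivity

theorem stmt_15_general {X : Type*} [AddCommGroup X] [Module ℝ X]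
    (M : Submodule ℝ X) (π : M →ₗ[ℝ] ℝ)
    (U : M) (hU1 : π U = 1)
    (A : Set X) :
    (∀ m : ℝ,
      {x : X | rho M π A x ≤ (m : EReal)}
        = (fun y => y - m • (U : X)) '' {x : X | rho M π A x ≤ (0 : EReal)}) ∧
    ({x : X | rho M π A x ≤ (0 : EReal)}
        = clK (-(U : X)) {x : X | rho M π A x ≤ (0 : EReal)}) ∧
    (∀ x : X, rho M π {y : X | rho M π A y ≤ (0 : EReal)} x = rho M π A x) := by
  refine ⟨setOf_rho_le_eq_image_sub_smul hU1, ?_, rho_setOf_rho_le_zero hU1⟩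
  simpa only [EReal.coe_zero] using (clK_neg_setOf_rho_le (A := A) hU1 0).symm

theorem stmt_15 {X : Type*} [AddCommGroup X] [Module ℝ X]
(Xpos : Set X)
    (hXpos0 : (0 : X) ∈ Xpos)
    (hXposSmul : ∀ t : ℝ, 0 ≤ t → ∀ x ∈ Xpos, t • x ∈ Xpos)
    (hXposConv : Convex ℝ Xpos)
    (hXposPointed : ∀ x ∈ Xpos, -x ∈ Xpos → x = 0)
    (M : Submodule ℝ X) (π : M →ₗ[ℝ] ℝ)
    (U : M) (hUpos : (U : X) ∈ Xpos) (hU1 : π U = 1)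
    (A : Set X) (hA0 : (0 : X) ∈ A) (hAne : A ≠ Set.univ) (hAmono : A + Xpos ⊆ A) :
    (∀ m : ℝ,
      {x : X | rho M π A x ≤ (m : EReal)}
        = (fun y => y - m • (U : X)) '' {x : X | rho M π A x ≤ (0 : EReal)}) ∧
    ({x : X | rho M π A x ≤ (0 : EReal)}
        = clK (-(U : X)) {x : X | rho M π A x ≤ (0 : EReal)}) ∧
    (∀ x : X, rho M π {y : X | rho M π A y ≤ (0 : EReal)} x = rho M π A x) :=
  stmt_15_general M π U hU1 A
end

section
/- Let 𝒟 ⊆ 𝒳 be any set satisfying 𝒜 + ker π ⊆ 𝒟 + ker π ⊆ cl_{−U}(𝒜 + ker π). Then for every X ∈ 𝒳, inf{π(Z) : Z ∈ ℳ, X + Z ∈ 𝒟} = inf{π(Z) : Z ∈ ℳ, X + Z ∈ 𝒜}, i.e. the risk measures associated with 𝒟 and with 𝒜 coincide. -/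
open Pointwise

lemma zero_mem_kerSet {X : Type*} [AddCommGroup X] [Module ℝ X]
    (M : Submodule ℝ X) (π : M →ₗ[ℝ] ℝ) : (0 : X) ∈ kerSet M π :=
  ⟨0, by simp [Set.mem_setOf_eq], rfl⟩

lemma rho_add_ker {X : Type*} [AddCommGroup X] [Module ℝ X]
    (M : Submodule ℝ X) (π : M →ₗ[ℝ] ℝ) (S : Set X) (x : X) :
    rho M π (S + kerSet M π) x = rho M π S x := by
  unfold rho
  congr 1
  ext r
  constructor
  · rintro ⟨Z, hZ, hr⟩
    rw [Set.mem_add] at hZ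
    obtain ⟨s, hs, k, ⟨k', hk', rfl⟩, hsum⟩ := hZ
    refine ⟨Z - k', ?_, by simp [map_sub, Set.mem_setOf_eq.mp hk', hr]⟩
    have : x + ((Z : X) - (k' : X)) = s := by
      have : s + (k' : X) = x + (Z : X) := hsum
      linear_combination (norm := abel) -this
    simpa [this] using hs
  · rintro ⟨Z, hZ, hr⟩
    exact ⟨Z, ⟨x + (Z : X), hZ, 0, zero_mem_kerSet M π, by simp⟩, hr⟩

theorem stmt_16 {X : Type*} [AddCommGroup X] [Module ℝ X]
(Xpos : Set X)
    (hXpos0 : (0 : X) ∈ Xpos)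
    (hXposSmul : ∀ t : ℝ, 0 ≤ t → ∀ x ∈ Xpos, t • x ∈ Xpos)
    (hXposConv : Convex ℝ Xpos)
    (hXposPointed : ∀ x ∈ Xpos, -x ∈ Xpos → x = 0)
    (M : Submodule ℝ X) (π : M →ₗ[ℝ] ℝ)
    (U : M) (hUpos : (U : X) ∈ Xpos) (hU1 : π U = 1)
    (A : Set X) (hA0 : (0 : X) ∈ A) (hAne : A ≠ Set.univ) (hAmono : A + Xpos ⊆ A)
    (D : Set X)
    (hD1 : A + kerSet M π ⊆ D + kerSet M π)
    (hD2 : D + kerSet M π ⊆ clK (-(U : X)) (A + kerSet M π)) :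
    ∀ x : X, rho M π D x = rho M π A x := by
  intro x
  have hDK : rho M π D x = rho M π (D + kerSet M π) x := (rho_add_ker M π D x).symm
  have hAK : rho M π A x = rho M π (A + kerSet M π) x := (rho_add_ker M π A x).symm
  apply le_antisymm
  · rw [hDK]
    apply sInf_le_sInf
    rintro r ⟨Z, hZ, hr⟩
    exact ⟨Z, hD1 ⟨x + (Z : X), hZ, 0, zero_mem_kerSet M π, by simp⟩, hr⟩
  · rw [hDK]
    apply le_sInf
    rintro r ⟨Z, hZD, rfl⟩
    have hcl := hD2 hZD
    have key : ∀ ε : ℝ, 0 < ε → rho M π A x ≤ ((π Z + ε : ℝ) : EReal) := by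
      intro ε hε
      obtain ⟨t, ht0, htε, hmem⟩ := hcl ε hε
      have heq : x + (Z : X) - t • (-(U : X)) = x + ((Z + t • U : M) : X) := by
        simp [smul_neg]
        abel
      rw [heq] at hmem
      rw [hAK]
      calc rho M π (A + kerSet M π) x ≤ ((π (Z + t • U) : ℝ) : EReal) :=
            sInf_le ⟨Z + t • U, hmem, rfl⟩
        _ ≤ ((π Z + ε : ℝ) : EReal) := by
            apply EReal.coe_le_coe_iff.mpr
            simp [map_add, map_smul, hU1]
            linarith
    refine le_of_forall_gt_imp_ge_of_dense ?_
    intro c hc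
    induction c using EReal.rec with
    | bot => exact absurd hc (by simp)
    | coe c =>
      have hc' : π Z < c := EReal.coe_lt_coe_iff.mp hc
      have := key (c - π Z) (by linarith)
      simpa using this
    | top => exact le_top
end

section
/- The domain of ρ satisfies dom ρ := {X ∈ 𝒳 : ρ(X) < +∞} = 𝒜 + ker π + {t·U : t ∈ ℝ} = 𝒜 + ℳ. Moreover, for every X ∈ 𝒳: ρ(X) ∈ ℝ (i.e. ρ(X) is finite) if and only if X ∈ bd_{−U}(𝒜 + ker π) + {t·U : t ∈ ℝ}. -/
open Pointwise

section Helpers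
variable {X : Type*} [AddCommGroup X] [Module ℝ X]
  (M : Submodule ℝ X) (π : M →ₗ[ℝ] ℝ)

lemma rho_eq (U : M) (hU1 : π U = 1) (A : Set X) (x : X) :
    rho M π A x = sInf ((fun s : ℝ => (s : EReal)) ''
      {s : ℝ | x + s • (U : X) ∈ A + kerSet M π}) := by
  unfold rho
  congr 1
  ext r
  simp only [Set.mem_setOf_eq, Set.mem_image]
  constructor
  · rintro ⟨Z, hZ, rfl⟩
    refine ⟨π Z, ?_, rfl⟩
    refine ⟨x + Z, hZ, ((π Z) • U - Z : M), ⟨(π Z) • U - Z, by simp [hU1], rfl⟩, ?_⟩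
    push_cast
    abel
  · rintro ⟨s, hs, rfl⟩
    obtain ⟨a, ha, k, ⟨Z0, hZ0, rfl⟩, hsum⟩ := hs
    simp only [Set.mem_setOf_eq] at hZ0
    refine ⟨s • U - Z0, ?_, by simp [hU1, hZ0]⟩
    have hsum' : a + (Z0 : X) = x + s • (U : X) := hsum
    have h : a = x + s • (U : X) - (Z0 : X) := by rw [← hsum']; exact (add_sub_cancel_right a _).symm
    have : x + ((s • U - Z0 : M) : X) = a := by push_cast; rw [h]; abel
    rwa [this]

lemma sInf_image_lt_top_iff (S : Set ℝ) :
    sInf ((fun s : ℝ => (s : EReal)) '' S) < ⊤ ↔ S.Nonempty := by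
  constructor
  · intro h
    by_contra hne
    rw [Set.not_nonempty_iff_eq_empty] at hne
    simp [hne] at h
  · rintro ⟨s, hs⟩
    exact lt_of_le_of_lt (sInf_le ⟨s, hs, rfl⟩) (EReal.coe_lt_top s)

lemma sInf_image_finite_iff (S : Set ℝ) :
    (sInf ((fun s : ℝ => (s : EReal)) '' S) ≠ ⊤ ∧
      sInf ((fun s : ℝ => (s : EReal)) '' S) ≠ ⊥) ↔ S.Nonempty ∧ BddBelow S := by
  constructor
  · rintro ⟨ht, hb⟩
    have hne : S.Nonempty := (sInf_image_lt_top_iff S).1 (lt_of_le_of_ne le_top ht)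
    refine ⟨hne, ?_⟩
    obtain ⟨r, hr⟩ : ∃ r : ℝ, sInf ((fun s : ℝ => (s : EReal)) '' S) = (r : EReal) := by
      lift sInf ((fun s : ℝ => (s : EReal)) '' S) to ℝ using ⟨ht, hb⟩ with r hr
      exact ⟨r, rfl⟩
    refine ⟨r, fun s hs => ?_⟩
    have : sInf ((fun s : ℝ => (s : EReal)) '' S) ≤ (s : EReal) := sInf_le ⟨s, hs, rfl⟩
    rw [hr] at this
    exact_mod_cast this
  · rintro ⟨⟨s, hs⟩, b, hb⟩
    constructor
    · exact ne_top_of_lt ((sInf_image_lt_top_iff S).2 ⟨s, hs⟩)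
    · have : (b : EReal) ≤ sInf ((fun s : ℝ => (s : EReal)) '' S) := by
        apply le_sInf
        rintro y ⟨t, ht, rfl⟩
        exact EReal.coe_le_coe_iff.2 (hb ht)
      exact fun h => by simp [h] at this

end Helpers

theorem stmt_17 {X : Type*} [AddCommGroup X] [Module ℝ X]
(Xpos : Set X)
    (hXpos0 : (0 : X) ∈ Xpos)
    (hXposSmul : ∀ t : ℝ, 0 ≤ t → ∀ x ∈ Xpos, t • x ∈ Xpos)
    (hXposConv : Convex ℝ Xpos)
    (hXposPointed : ∀ x ∈ Xpos, -x ∈ Xpos → x = 0)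
    (M : Submodule ℝ X) (π : M →ₗ[ℝ] ℝ)
    (U : M) (hUpos : (U : X) ∈ Xpos) (hU1 : π U = 1)
    (A : Set X) (hA0 : (0 : X) ∈ A) (hAne : A ≠ Set.univ) (hAmono : A + Xpos ⊆ A) :
    ({x : X | rho M π A x < ⊤}
        = A + kerSet M π + {y : X | ∃ t : ℝ, y = t • (U : X)}) ∧
    ({x : X | rho M π A x < ⊤} = A + (M : Set X)) ∧
    (∀ x : X, (rho M π A x ≠ ⊤ ∧ rho M π A x ≠ ⊥)
        ↔ x ∈ bdK (-(U : X)) (A + kerSet M π) + {y : X | ∃ t : ℝ, y = t • (U : X)}) := by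
  set B : Set X := A + kerSet M π with hB
  set S : X → Set ℝ := fun x => {s : ℝ | x + s • (U : X) ∈ B} with hS
  have hmemS : ∀ (w : X) (s : ℝ), s ∈ S w ↔ w + s • (U : X) ∈ B := fun _ _ => Iff.rfl
  have hrho : ∀ x : X, rho M π A x = sInf ((fun s : ℝ => (s : EReal)) '' S x) :=
    fun x => rho_eq M π U hU1 A x
  -- upward closedness of S
  have hup : ∀ (w : X) (s s' : ℝ), s ≤ s' → s ∈ S w → s' ∈ S w := by
    intro w s s' hss hsw
    obtain ⟨a, ha, k, hk, hsum⟩ := hsw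
    have hsum' : a + k = w + s • (U : X) := hsum
    have ha' : a + (s' - s) • (U : X) ∈ A :=
      hAmono ⟨a, ha, (s' - s) • (U : X), hXposSmul _ (by linarith) _ hUpos, rfl⟩
    refine ⟨a + (s' - s) • (U : X), ha', k, hk, ?_⟩
    show a + (s' - s) • (U : X) + k = w + s' • (U : X)
    have : a + (s' - s) • (U : X) + k = (a + k) + (s' - s) • (U : X) := by abel
    rw [this, hsum']
    module
  have hdom : ∀ x : X, rho M π A x < ⊤ ↔ (S x).Nonempty := by
    intro x; rw [hrho x]; exact sInf_image_lt_top_iff _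
  refine ⟨?_, ?_, ?_⟩
  · ext x
    simp only [Set.mem_setOf_eq, hdom x]
    constructor
    · rintro ⟨s, hs⟩
      refine ⟨x + s • (U : X), hs, (-s) • (U : X), ⟨-s, rfl⟩, ?_⟩
      show x + s • (U : X) + (-s) • (U : X) = x
      module
    · rintro ⟨b, hb, y, ⟨t, rfl⟩, hxy⟩
      have hxy' : b + t • (U : X) = x := hxy
      refine ⟨-t, ?_⟩
      rw [hmemS]
      have : x + (-t) • (U : X) = b := by rw [← hxy']; module
      rwa [this]
  · ext x
    simp only [Set.mem_setOf_eq, hdom x]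
    constructor
    · rintro ⟨s, hs⟩
      rw [hmemS] at hs
      obtain ⟨a, ha, k, ⟨Z0, hZ0, rfl⟩, hsum⟩ := hs
      have hsum' : a + (Z0 : X) = x + s • (U : X) := hsum
      refine ⟨a, ha, ((Z0 - s • U : M) : X), SetLike.coe_mem _, ?_⟩
      show a + ((Z0 - s • U : M) : X) = x
      push_cast
      have : a + ((Z0 : X) - s • (U : X)) = (a + (Z0 : X)) - s • (U : X) := by abel
      rw [this, hsum']
      module
    · rintro ⟨a, ha, z, hz, hsum⟩
      obtain ⟨Zm, rfl⟩ : ∃ Zm : M, (Zm : X) = z := ⟨⟨z, hz⟩, rfl⟩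
      have hsum' : a + (Zm : X) = x := hsum
      refine ⟨-(π Zm), ?_⟩
      rw [hmemS]
      refine ⟨a, ha, ((Zm + (-(π Zm)) • U : M) : X),
        ⟨Zm + (-(π Zm)) • U, by simp [hU1], rfl⟩, ?_⟩
      show a + ((Zm + (-(π Zm)) • U : M) : X) = x + (-(π Zm)) • (U : X)
      push_cast
      rw [← hsum']
      module
  · intro x
    rw [hrho x, sInf_image_finite_iff]
    constructor
    · rintro ⟨hne, hbdd⟩
      set m : ℝ := sInf (S x) with hm
      have hm_le : ∀ s ∈ S x, m ≤ s := fun s hs => csInf_le hbdd hs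
      have hcl : x + m • (U : X) ∈ clK (-(U : X)) B := by
        intro l hl
        obtain ⟨s, hs, hsl⟩ := exists_lt_of_csInf_lt hne (show sInf (S x) < m + l by linarith)
        refine ⟨s - m, by linarith [hm_le s hs], by linarith, ?_⟩
        have : x + m • (U : X) - (s - m) • (-(U : X)) = x + s • (U : X) := by module
        rw [this]
        exact (hmemS x s).1 hs
      have hint : x + m • (U : X) ∉ intK (-(U : X)) B := by
        rintro ⟨l, hl, h⟩
        have h' := h l hl.le le_rfl
        have : x + m • (U : X) + l • (-(U : X)) = x + (m - l) • (U : X) := by module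
        rw [this] at h'
        have := hm_le (m - l) ((hmemS x (m - l)).2 h')
        linarith
      refine ⟨x + m • (U : X), ⟨hcl, hint⟩, (-m) • (U : X), ⟨-m, rfl⟩, ?_⟩
      show x + m • (U : X) + (-m) • (U : X) = x
      module
    · rintro ⟨y, ⟨hcl, hint⟩, w, ⟨t, rfl⟩, hxy⟩
      have hxy' : y + t • (U : X) = x := hxy
      have hshift : ∀ s : ℝ, s ∈ S x ↔ (t + s) ∈ S y := by
        intro s
        rw [hmemS, hmemS]
        have : x + s • (U : X) = y + (t + s) • (U : X) := by rw [← hxy']; module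
        rw [this]
      constructor
      · obtain ⟨t', ht'0, ht'1, hmem⟩ := hcl 1 one_pos
        refine ⟨t' - t, ?_⟩
        rw [hshift, hmemS]
        have : y + (t + (t' - t)) • (U : X) = y - t' • (-(U : X)) := by module
        rw [this]
        exact hmem
      · refine ⟨-t, fun s hs => ?_⟩
        by_contra hlt
        push_neg at hlt
        have hts : t + s < 0 := by linarith
        refine hint ⟨-(t + s), by linarith, fun t'' ht''0 ht''l => ?_⟩
        have hmem : (-t'') ∈ S y := hup y (t + s) (-t'') (by linarith) ((hshift s).1 hs)
        rw [hmemS] at hmem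
        have : y + t'' • (-(U : X)) = y + (-t'') • (U : X) := by module
        rw [this]
        exact hmem
end

section
/- The risk measure ρ is proper (i.e. ρ(X) > −∞ for all X ∈ 𝒳 and ρ(X) < +∞ for some X ∈ 𝒳) if and only if 𝒜 + ker π contains no line parallel to U, i.e. for every X ∈ 𝒜 + ker π there exists m ∈ ℝ with X + m·U ∉ 𝒜 + ker π. -/
open Pointwise

theorem stmt_18 {X : Type*} [AddCommGroup X] [Module ℝ X]
(Xpos : Set X)
    (hXpos0 : (0 : X) ∈ Xpos)
    (hXposSmul : ∀ t : ℝ, 0 ≤ t → ∀ x ∈ Xpos, t • x ∈ Xpos)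
    (hXposConv : Convex ℝ Xpos)
    (hXposPointed : ∀ x ∈ Xpos, -x ∈ Xpos → x = 0)
    (M : Submodule ℝ X) (π : M →ₗ[ℝ] ℝ)
    (U : M) (hUpos : (U : X) ∈ Xpos) (hU1 : π U = 1)
    (A : Set X) (hA0 : (0 : X) ∈ A) (hAne : A ≠ Set.univ) (hAmono : A + Xpos ⊆ A) :
    ((∀ x : X, rho M π A x ≠ ⊥) ∧ (∃ x : X, rho M π A x ≠ ⊤))
      ↔ ∀ x ∈ A + kerSet M π, ∃ m : ℝ, x + m • (U : X) ∉ A + kerSet M π := by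
  classical
  set B : Set X := A + kerSet M π with hB
  -- key equivalence
  have key : ∀ (x : X) (r : ℝ),
      (∃ Z : M, x + (Z : X) ∈ A ∧ π Z = r) ↔ x + r • (U : X) ∈ B := by
    intro x r
    constructor
    · rintro ⟨Z, hZA, hZr⟩
      refine ⟨x + (Z : X), hZA, ((r • U - Z : M) : X), ⟨r • U - Z, ?_, rfl⟩, ?_⟩
      · simp [map_sub, hZr, hU1]
      · push_cast
        abel
    · rintro ⟨a, ha, k, ⟨K, hK, rfl⟩, hak⟩
      have hak' : a + (K : X) = x + r • (U : X) := hak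
      have hK' : π K = 0 := hK
      refine ⟨r • U - K, ?_, ?_⟩
      · have hx : x = a + (K : X) - r • (U : X) := by rw [hak']; abel
        have : x + ((r • U - K : M) : X) = a := by
          push_cast
          rw [hx]; abel
        rwa [this]
      · simp [map_sub, hK', hU1]
  have hTS : ∀ x : X,
      {r : EReal | ∃ Z : M, x + (Z : X) ∈ A ∧ ((π Z : ℝ) : EReal) = r}
        = (fun r : ℝ => (r : EReal)) '' {r : ℝ | x + r • (U : X) ∈ B} := by
    intro x
    ext r
    constructor
    · rintro ⟨Z, hZA, hZr⟩
      exact ⟨π Z, (key x (π Z)).mp ⟨Z, hZA, rfl⟩, hZr⟩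
    · rintro ⟨s, hs, rfl⟩
      obtain ⟨Z, hZA, hZs⟩ := (key x s).mpr hs
      exact ⟨Z, hZA, by rw [hZs]⟩
  have hrho : ∀ x : X, rho M π A x
      = sInf ((fun r : ℝ => (r : EReal)) '' {r : ℝ | x + r • (U : X) ∈ B}) := by
    intro x; rw [rho, hTS]
  -- upward closedness
  have up : ∀ (x : X) (r s : ℝ), r ≤ s → x + r • (U : X) ∈ B → x + s • (U : X) ∈ B := by
    intro x r s hrs hr
    rcases hr with ⟨a, ha, k, hk, hak⟩
    have hU' : (s - r) • (U : X) ∈ Xpos := hXposSmul _ (by linarith) _ hUpos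
    have hak' : a + k = x + r • (U : X) := hak
    refine ⟨a + (s - r) • (U : X), hAmono ⟨a, ha, _, hU', rfl⟩, k, hk, ?_⟩
    show a + (s - r) • (U : X) + k = x + s • (U : X)
    have h1 : x + s • (U : X) = (x + r • (U : X)) + (s - r) • (U : X) := by module
    rw [h1, ← hak']; abel
  constructor
  · rintro ⟨hbot, -⟩ x hx
    have h0 : x + (0 : ℝ) • (U : X) ∈ B := by simpa using hx
    have hle : rho M π A x ≤ ((0 : ℝ) : EReal) := by
      rw [hrho]; exact sInf_le ⟨0, h0, rfl⟩
    have hne : rho M π A x ≠ ⊥ := hbot x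
    obtain ⟨c, hc1, hc2⟩ := exists_between (Ne.bot_lt hne)
    have hcT : c ≠ ⊤ := by
      intro h; rw [h] at hc2
      exact absurd (lt_of_lt_of_le hc2 hle) (by simp)
    have hcB : c ≠ ⊥ := hc1.ne'
    refine ⟨c.toReal, fun hmem => ?_⟩
    have : rho M π A x ≤ ((c.toReal : ℝ) : EReal) := by
      rw [hrho]; exact sInf_le ⟨c.toReal, hmem, rfl⟩
    rw [EReal.coe_toReal hcT hcB] at this
    exact absurd (lt_of_lt_of_le hc2 this) (lt_irrefl _)
  · intro h
    constructor
    · intro x hbot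
      rw [hrho] at hbot
      have hne : {r : ℝ | x + r • (U : X) ∈ B}.Nonempty := by
        by_contra hemp
        rw [Set.not_nonempty_iff_eq_empty] at hemp
        rw [hemp] at hbot
        simp at hbot
      obtain ⟨r, hr⟩ := hne
      obtain ⟨m, hm⟩ := h (x + r • (U : X)) hr
      rw [add_assoc, ← add_smul] at hm
      have hlb : ((r + m : ℝ) : EReal)
          ≤ sInf ((fun r : ℝ => (r : EReal)) '' {r : ℝ | x + r • (U : X) ∈ B}) := by
        apply le_sInf
        rintro b ⟨s, hs, rfl⟩
        have : r + m < s := by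
          by_contra hle
          push_neg at hle
          exact hm (up x s (r + m) hle hs)
        show ((r + m : ℝ) : EReal) ≤ ((s : ℝ) : EReal)
        exact_mod_cast this.le
      rw [hbot] at hlb
      exact absurd (le_bot_iff.mp hlb) (EReal.coe_ne_bot _)
    · refine ⟨0, ?_⟩
      have h0 : (0 : X) + (0 : ℝ) • (U : X) ∈ B := by
        simpa using ⟨(0 : X), hA0, 0, ⟨0, by simp, rfl⟩, by simp⟩
      have : rho M π A 0 ≤ ((0 : ℝ) : EReal) := by
        rw [hrho]; exact sInf_le ⟨0, h0, rfl⟩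
      exact fun ht => by rw [ht] at this; exact absurd this (by simp)
end
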